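/- Let A, B, c ∈ ℝ with B² − A² = 1 and let ε = ±1. On the open set U := {(u,v) ∈ ℝ² : A·u + B·v + c < 0} (so that exp(A·u + B·v + c) < 1), the function θ(u,v) := 2ε·artanh(exp(A·u + B·v + c)) is smooth on U and satisfies the hyperbolic sinh-Gordon equation ∂²θ/∂v² − ∂²θ/∂u² = cosh θ · sinh θ at every point of U. -/

import Mathlib

/-- Partial derivative with respect to the first variable `u`. -/
noncomputable def pdu (f : ℝ × ℝ → ℝ) (p : ℝ × ℝ) : ℝ :=
  deriv (fun u => f (u, p.2)) p.1

/-- Partial derivative with respect to the second variable `v`. -/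
noncomputable def pdv (f : ℝ × ℝ → ℝ) (p : ℝ × ℝ) : ℝ :=
  deriv (fun v => f (p.1, v)) p.2

/-- The inverse hyperbolic tangent, `artanh x = (1/2)·log((1+x)/(1−x))`,
the inverse of `tanh` for arguments in `(−1,1)`. -/
noncomputable def artanh (x : ℝ) : ℝ :=
  Real.log ((1 + x) / (1 - x)) / 2

noncomputable def sgG (w : ℝ) : ℝ := Real.log (1 + Real.exp w) - Real.log (1 - Real.exp w)
noncomputable def sgG1 (w : ℝ) : ℝ := Real.exp w / (1 + Real.exp w) + Real.exp w / (1 - Real.exp w)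
noncomputable def sgG2 (w : ℝ) : ℝ := Real.exp w / (1 + Real.exp w) ^ 2 + Real.exp w / (1 - Real.exp w) ^ 2

lemma sg_exp_lt {w : ℝ} (hw : w < 0) : Real.exp w < 1 := by
  simpa using Real.exp_lt_exp.mpr hw

lemma sgG_hasDerivAt {w : ℝ} (hw : w < 0) : HasDerivAt sgG (sgG1 w) w := by
  have hx1 : (0:ℝ) < 1 + Real.exp w := by positivity
  have hx2 : (0:ℝ) < 1 - Real.exp w := by linarith [sg_exp_lt hw]
  have h1 : HasDerivAt (fun w => 1 + Real.exp w) (Real.exp w) w := by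
    simpa using (Real.hasDerivAt_exp w).const_add 1
  have h2 : HasDerivAt (fun w => 1 - Real.exp w) (-Real.exp w) w := by
    simpa using (Real.hasDerivAt_exp w).const_sub 1
  have := (h1.log hx1.ne').sub (h2.log hx2.ne')
  refine this.congr_deriv ?_
  unfold sgG1
  field_simp
  ring

lemma sgG1_hasDerivAt {w : ℝ} (hw : w < 0) : HasDerivAt sgG1 (sgG2 w) w := by
  have hx1 : (0:ℝ) < 1 + Real.exp w := by positivity
  have hx2 : (0:ℝ) < 1 - Real.exp w := by linarith [sg_exp_lt hw]
  have h1 : HasDerivAt (fun w => 1 + Real.exp w) (Real.exp w) w := by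
    simpa using (Real.hasDerivAt_exp w).const_add 1
  have h2 : HasDerivAt (fun w => 1 - Real.exp w) (-Real.exp w) w := by
    simpa using (Real.hasDerivAt_exp w).const_sub 1
  have hd1 := (Real.hasDerivAt_exp w).div h1 hx1.ne'
  have hd2 := (Real.hasDerivAt_exp w).div h2 hx2.ne'
  have := hd1.add hd2
  refine this.congr_deriv ?_
  unfold sgG2
  field_simp
  ring

lemma sg_key {w : ℝ} (hw : w < 0) : Real.cosh (sgG w) * Real.sinh (sgG w) = sgG2 w := by
  have hx1 : (0:ℝ) < 1 + Real.exp w := by positivity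
  have hx2 : (0:ℝ) < 1 - Real.exp w := by linarith [sg_exp_lt hw]
  have he : Real.exp (sgG w) = (1 + Real.exp w) / (1 - Real.exp w) := by
    rw [sgG, Real.exp_sub, Real.exp_log hx1, Real.exp_log hx2]
  have he' : Real.exp (-sgG w) = (1 - Real.exp w) / (1 + Real.exp w) := by
    rw [Real.exp_neg, he]
    field_simp
  rw [Real.cosh_eq, Real.sinh_eq, he, he', sgG2]
  field_simp
  ring

/-- The 1-soliton `θ(u,v) = 2ε·artanh(exp(A·u + B·v + c))` with `B² − A² = 1`, `ε = ±1`,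
is smooth on `U = {A·u + B·v + c < 0}` and satisfies the hyperbolic sinh-Gordon equation
`∂²θ/∂v² − ∂²θ/∂u² = cosh θ · sinh θ` on `U`. -/
theorem oneSoliton_hyperbolic_sinhGordon
    (A B c ε : ℝ) (hAB : B ^ 2 - A ^ 2 = 1) (hε : ε = 1 ∨ ε = -1)
    (U : Set (ℝ × ℝ)) (hU : U = {p : ℝ × ℝ | A * p.1 + B * p.2 + c < 0})
    (θ : ℝ × ℝ → ℝ)
    (hθ : θ = fun p : ℝ × ℝ => 2 * ε * artanh (Real.exp (A * p.1 + B * p.2 + c))) :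
    ContDiffOn ℝ (⊤ : ℕ∞) θ U ∧
      ∀ p ∈ U,
        pdv (pdv θ) p - pdu (pdu θ) p = Real.cosh (θ p) * Real.sinh (θ p) := by
  -- θ agrees with ε * sgG ∘ w on the region w < 0
  have hθG : ∀ p : ℝ × ℝ, A * p.1 + B * p.2 + c < 0 →
      θ p = ε * sgG (A * p.1 + B * p.2 + c) := by
    intro p hp
    have hx1 : (0:ℝ) < 1 + Real.exp (A * p.1 + B * p.2 + c) := by positivity
    have hx2 : (0:ℝ) < 1 - Real.exp (A * p.1 + B * p.2 + c) := by
      linarith [sg_exp_lt hp]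
    simp only [hθ]
    unfold artanh sgG
    rw [Real.log_div hx1.ne' hx2.ne']
    ring
  -- the region is open
  have hcont : Continuous (fun p : ℝ × ℝ => A * p.1 + B * p.2 + c) := by fun_prop
  have hopen : IsOpen {p : ℝ × ℝ | A * p.1 + B * p.2 + c < 0} :=
    isOpen_lt hcont continuous_const
  -- first partial derivatives
  have hpdu : ∀ q : ℝ × ℝ, A * q.1 + B * q.2 + c < 0 →
      pdu θ q = ε * A * sgG1 (A * q.1 + B * q.2 + c) := by
    intro q hq
    have hsopen : IsOpen {u : ℝ | A * u + B * q.2 + c < 0} :=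
      isOpen_lt (by fun_prop) continuous_const
    have hmem : {u : ℝ | A * u + B * q.2 + c < 0} ∈ nhds q.1 :=
      hsopen.mem_nhds hq
    have hev : (fun u => θ (u, q.2)) =ᶠ[nhds q.1]
        (fun u => ε * sgG (A * u + B * q.2 + c)) := by
      filter_upwards [hmem] with u hu
      exact hθG (u, q.2) hu
    have hinner : HasDerivAt (fun u : ℝ => A * u + B * q.2 + c) A q.1 := by
      have : HasDerivAt (fun u : ℝ => A * u + (B * q.2 + c)) A q.1 := by
        simpa using ((hasDerivAt_id q.1).const_mul A).add_const (B * q.2 + c)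
      convert this using 2 with u
      ring
    have hd : HasDerivAt (fun u => ε * sgG (A * u + B * q.2 + c))
        (ε * (sgG1 (A * q.1 + B * q.2 + c) * A)) q.1 := by
      have := (((sgG_hasDerivAt hq).comp q.1 hinner)).const_mul ε; exact this
    rw [pdu, hev.deriv_eq, hd.deriv]
    ring
  have hpdv : ∀ q : ℝ × ℝ, A * q.1 + B * q.2 + c < 0 →
      pdv θ q = ε * B * sgG1 (A * q.1 + B * q.2 + c) := by
    intro q hq
    have hsopen : IsOpen {v : ℝ | A * q.1 + B * v + c < 0} :=
      isOpen_lt (by fun_prop) continuous_const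
    have hmem : {v : ℝ | A * q.1 + B * v + c < 0} ∈ nhds q.2 :=
      hsopen.mem_nhds hq
    have hev : (fun v => θ (q.1, v)) =ᶠ[nhds q.2]
        (fun v => ε * sgG (A * q.1 + B * v + c)) := by
      filter_upwards [hmem] with v hv
      exact hθG (q.1, v) hv
    have hinner : HasDerivAt (fun v : ℝ => A * q.1 + B * v + c) B q.2 := by
      have : HasDerivAt (fun v : ℝ => B * v + (A * q.1 + c)) B q.2 := by
        simpa using ((hasDerivAt_id q.2).const_mul B).add_const (A * q.1 + c)
      convert this using 2 with v
      ring
    have hd : HasDerivAt (fun v => ε * sgG (A * q.1 + B * v + c))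
        (ε * (sgG1 (A * q.1 + B * q.2 + c) * B)) q.2 := by
      have := (((sgG_hasDerivAt hq).comp q.2 hinner)).const_mul ε; exact this
    rw [pdv, hev.deriv_eq, hd.deriv]
    ring
  -- second partial derivatives
  have hpduu : ∀ p : ℝ × ℝ, A * p.1 + B * p.2 + c < 0 →
      pdu (pdu θ) p = ε * A * A * sgG2 (A * p.1 + B * p.2 + c) := by
    intro p hp
    have hsopen : IsOpen {u : ℝ | A * u + B * p.2 + c < 0} :=
      isOpen_lt (by fun_prop) continuous_const
    have hmem : {u : ℝ | A * u + B * p.2 + c < 0} ∈ nhds p.1 :=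
      hsopen.mem_nhds hp
    have hev : (fun u => pdu θ (u, p.2)) =ᶠ[nhds p.1]
        (fun u => ε * A * sgG1 (A * u + B * p.2 + c)) := by
      filter_upwards [hmem] with u hu
      exact hpdu (u, p.2) hu
    have hinner : HasDerivAt (fun u : ℝ => A * u + B * p.2 + c) A p.1 := by
      have : HasDerivAt (fun u : ℝ => A * u + (B * p.2 + c)) A p.1 := by
        simpa using ((hasDerivAt_id p.1).const_mul A).add_const (B * p.2 + c)
      convert this using 2 with u
      ring
    have hd : HasDerivAt (fun u => ε * A * sgG1 (A * u + B * p.2 + c))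
        (ε * A * (sgG2 (A * p.1 + B * p.2 + c) * A)) p.1 :=
      (((sgG1_hasDerivAt hp).comp p.1 hinner)).const_mul (ε * A)
    rw [pdu, hev.deriv_eq, hd.deriv]
    ring
  have hpdvv : ∀ p : ℝ × ℝ, A * p.1 + B * p.2 + c < 0 →
      pdv (pdv θ) p = ε * B * B * sgG2 (A * p.1 + B * p.2 + c) := by
    intro p hp
    have hsopen : IsOpen {v : ℝ | A * p.1 + B * v + c < 0} :=
      isOpen_lt (by fun_prop) continuous_const
    have hmem : {v : ℝ | A * p.1 + B * v + c < 0} ∈ nhds p.2 :=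
      hsopen.mem_nhds hp
    have hev : (fun v => pdv θ (p.1, v)) =ᶠ[nhds p.2]
        (fun v => ε * B * sgG1 (A * p.1 + B * v + c)) := by
      filter_upwards [hmem] with v hv
      exact hpdv (p.1, v) hv
    have hinner : HasDerivAt (fun v : ℝ => A * p.1 + B * v + c) B p.2 := by
      have : HasDerivAt (fun v : ℝ => B * v + (A * p.1 + c)) B p.2 := by
        simpa using ((hasDerivAt_id p.2).const_mul B).add_const (A * p.1 + c)
      convert this using 2 with v
      ring
    have hd : HasDerivAt (fun v => ε * B * sgG1 (A * p.1 + B * v + c))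
        (ε * B * (sgG2 (A * p.1 + B * p.2 + c) * B)) p.2 :=
      (((sgG1_hasDerivAt hp).comp p.2 hinner)).const_mul (ε * B)
    rw [pdv, hev.deriv_eq, hd.deriv]
    ring
  constructor
  · -- smoothness
    intro p hp
    rw [hU] at hp
    apply ContDiffAt.contDiffWithinAt
    have hx1 : (0:ℝ) < 1 + Real.exp (A * p.1 + B * p.2 + c) := by positivity
    have hx2 : (0:ℝ) < 1 - Real.exp (A * p.1 + B * p.2 + c) := by
      linarith [sg_exp_lt hp]
    have hbase : ContDiffAt ℝ (⊤ : ℕ∞) (fun p : ℝ × ℝ => Real.exp (A * p.1 + B * p.2 + c)) p := by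
      fun_prop
    have c1 : ContDiffAt ℝ (⊤ : ℕ∞) (fun p : ℝ × ℝ => 1 + Real.exp (A * p.1 + B * p.2 + c)) p :=
      contDiffAt_const.add hbase
    have c2 : ContDiffAt ℝ (⊤ : ℕ∞) (fun p : ℝ × ℝ => 1 - Real.exp (A * p.1 + B * p.2 + c)) p :=
      contDiffAt_const.sub hbase
    have hsm : ContDiffAt ℝ (⊤ : ℕ∞)
        (fun p : ℝ × ℝ => ε * sgG (A * p.1 + B * p.2 + c)) p := by
      unfold sgG
      exact contDiffAt_const.mul ((c1.log hx1.ne').sub (c2.log hx2.ne'))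
    apply hsm.congr_of_eventuallyEq
    filter_upwards [hopen.mem_nhds hp] with q hq
    exact hθG q hq
  · intro p hp
    rw [hU] at hp
    rw [hpdvv p hp, hpduu p hp, hθG p hp]
    rcases hε with h | h <;> subst h
    · have e1 : (1:ℝ) * sgG (A * p.1 + B * p.2 + c) = sgG (A * p.1 + B * p.2 + c) :=
        one_mul _
      rw [e1, sg_key hp]
      linear_combination (sgG2 (A * p.1 + B * p.2 + c)) * hAB
    · have e1 : (-1:ℝ) * sgG (A * p.1 + B * p.2 + c) = -sgG (A * p.1 + B * p.2 + c) := by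
        ring
      rw [e1, Real.cosh_neg, Real.sinh_neg, mul_neg, sg_key hp]
      linear_combination (-(sgG2 (A * p.1 + B * p.2 + c))) * hAB
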